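/- There do not exist Lebesgue-measurable probability densities p_Θ : ℝ → [0,∞) and p_Y : ℝ → [0,∞) (each nonnegative with total Lebesgue integral 1) such that for all θ, y ∈ ℝ: p_Θ(θ) · N(y; θ/2, 1/(1+θ²)) = p_Y(y) · N(θ; y/2, 1/(1+y²)). That is, the Gaussian conditional families f(y|θ) = N(y; θ/2, 1/(1+θ²)) and q(θ|y) = N(θ; y/2, 1/(1+y²)) are incompatible: no joint probability distribution on ℝ² has them as its conditional densities. -/

import Mathlib

open MeasureTheory

/-- The one-dimensional Gaussian density `N(x; m, v)` with variance `v`. -/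
noncomputable def gauss1 (m v x : ℝ) : ℝ :=
  (2 * Real.pi * v) ^ (-(1 : ℝ) / 2) * Real.exp (-(x - m) ^ 2 / (2 * v))

/-!
Put `y = 0`: then `p_Θ(θ) N(0; θ/2, 1/(1+θ²)) = p_Y(0) N(θ; 0, 1)`. For `|θ| ≥ 3` the
left Gaussian factor, of order `θ e^{-θ⁴/8}`, is below the standard normal density
`e^{-θ²/2}/√(2π)`, so `p_Θ ≥ p_Y(0)` on `[3, ∞)`. Integrability of `p_Θ` then forces
`p_Y(0) = 0`, hence `p_Θ = 0`, contradicting `∫ p_Θ = 1`.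
-/

open Real

lemma gauss1_pos (m x : ℝ) {v : ℝ} (hv : 0 < v) : 0 < gauss1 m v x :=
  mul_pos (rpow_pos_of_pos (by positivity) _) (exp_pos _)

lemma sqrt_one_add_sq_le_exp {θ : ℝ} (hθ : 9 ≤ θ ^ 2) :
    √(1 + θ ^ 2) ≤ exp (θ ^ 2 * (θ ^ 2 - 3) / 8) :=
  calc √(1 + θ ^ 2) ≤ √(exp (3 / 4 * θ ^ 2) ^ 2) := by
        rw [← exp_nat_mul]
        gcongr
        linarith [add_one_le_exp (↑(2 : ℕ) * (3 / 4 * θ ^ 2))]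
    _ = exp (3 / 4 * θ ^ 2) := sqrt_sq (exp_pos _).le
    _ ≤ exp (θ ^ 2 * (θ ^ 2 - 3) / 8) := by gcongr; nlinarith

lemma gauss1_half_mean_le_std {θ : ℝ} (hθ : 9 ≤ θ ^ 2) :
    gauss1 (θ / 2) (1 / (1 + θ ^ 2)) 0 ≤ gauss1 0 1 θ := by
  have hs : 0 < 1 + θ ^ 2 := by positivity
  have hpi : 0 < 2 * π := by positivity
  have hscale : (2 * π * (1 / (1 + θ ^ 2))) ^ (-(1 : ℝ) / 2)
      = (2 * π) ^ (-(1 : ℝ) / 2) * √(1 + θ ^ 2) := by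
    rw [mul_one_div, div_rpow hpi.le hs.le, neg_div, rpow_neg hs.le, div_inv_eq_mul,
      ← sqrt_eq_rpow]
  have hexp : -(0 - θ / 2) ^ 2 / (2 * (1 / (1 + θ ^ 2)))
      = -θ ^ 2 / 2 - θ ^ 2 * (θ ^ 2 - 3) / 8 := by
    field_simp
    ring
  unfold gauss1
  rw [hscale, hexp, exp_sub]
  simp only [mul_one, sub_zero]
  calc (2 * π) ^ (-(1 : ℝ) / 2) * √(1 + θ ^ 2) *
        (exp (-θ ^ 2 / 2) / exp (θ ^ 2 * (θ ^ 2 - 3) / 8))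
      ≤ (2 * π) ^ (-(1 : ℝ) / 2) * exp (θ ^ 2 * (θ ^ 2 - 3) / 8) *
        (exp (-θ ^ 2 / 2) / exp (θ ^ 2 * (θ ^ 2 - 3) / 8)) := by
        gcongr
        exact sqrt_one_add_sq_le_exp hθ
    _ = (2 * π) ^ (-(1 : ℝ) / 2) * exp (-(θ ^ 2) / 2) := by
        field_simp

lemma not_integrable_of_const_le_on_Ici {f : ℝ → ℝ} {a c : ℝ} (hc : 0 < c)
    (hf : ∀ x ∈ Set.Ici a, c ≤ f x) : ¬ Integrable f := by
  intro hint
  have hconst : IntegrableOn (fun _ ↦ c) (Set.Ici a) := by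
    refine Integrable.mono' hint.integrableOn aestronglyMeasurable_const ?_
    filter_upwards [ae_restrict_mem measurableSet_Ici] with x hx
    rw [norm_of_nonneg hc.le]
    exact hf x hx
  rw [integrableOn_const_iff] at hconst
  rcases hconst with hzero | hfinite
  · exact hc.ne' (enorm_eq_zero.mp hzero)
  · simp [Real.volume_Ici] at hfinite

/-- The Gaussian conditional families `f(y|θ) = N(y; θ/2, 1/(1+θ²))` and
`q(θ|y) = N(θ; y/2, 1/(1+y²))` are incompatible: no joint probability distribution on
`ℝ²` has them as its conditional densities. -/
theorem incompatible_gaussian_conditionals :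
    ¬ ∃ (pΘ pY : ℝ → ℝ),
      Measurable pΘ ∧ Measurable pY ∧
      (∀ θ, 0 ≤ pΘ θ) ∧ (∀ y, 0 ≤ pY y) ∧
      (∫ θ : ℝ, pΘ θ) = 1 ∧ (∫ y : ℝ, pY y) = 1 ∧
      ∀ θ y : ℝ,
        pΘ θ * gauss1 (θ / 2) (1 / (1 + θ ^ 2)) y =
          pY y * gauss1 (y / 2) (1 / (1 + y ^ 2)) θ := by
  rintro ⟨pΘ, pY, -, -, -, hpY, hintΘ, -, hjoint⟩
  have hslice (θ : ℝ) :
      pΘ θ * gauss1 (θ / 2) (1 / (1 + θ ^ 2)) 0 = pY 0 * gauss1 0 1 θ := by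
    simpa using hjoint θ 0
  have hpos (θ : ℝ) : 0 < gauss1 (θ / 2) (1 / (1 + θ ^ 2)) 0 := gauss1_pos _ _ (by positivity)
  have hlower : ∀ θ ∈ Set.Ici (3 : ℝ), pY 0 ≤ pΘ θ := fun θ hθ ↦ by
    refine le_of_mul_le_mul_right ?_ (hpos θ)
    rw [hslice θ]
    exact mul_le_mul_of_nonneg_left
      (gauss1_half_mean_le_std (θ := θ) (by nlinarith [Set.mem_Ici.mp hθ])) (hpY 0)
  have hintegrable : Integrable pΘ := by
    by_contra h
    simp [integral_undef h] at hintΘ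
  have hpY0 : pY 0 = 0 :=
    ((hpY 0).eq_or_lt.resolve_right fun h ↦
      not_integrable_of_const_le_on_Ici h hlower hintegrable).symm
  have hzero : pΘ = 0 := funext fun θ ↦
    (mul_eq_zero_iff_right (hpos θ).ne').mp (by rw [hslice θ, hpY0, zero_mul])
  simp [hzero] at hintΘ
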